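/- For a quaternionic polynomial P, I ∈ 𝕊², and J ∈ 𝕊² orthogonal to I, write the restriction of P to ℂ(I) as P₁(z) + P₂(z)J with P₁, P₂ polynomials with coefficients in ℂ(I). Then for all z ∈ ℂ(I), P^s(z) = P₁(z)·conj(P₁(z̄)) + P₂(z)·conj(P₂(z̄)), where conj denotes conjugation in ℂ(I). -/
import Mathlib


open Quaternion Polynomial

/-- Evaluation of a quaternionic polynomial with coefficients written on the right. -/
noncomputable def qeval (P : Polynomial ℍ[ℝ]) (q : ℍ[ℝ]) : ℍ[ℝ] :=
  P.sum fun n a => q ^ n * a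

/-- Membership in the complex plane `ℂ(I)`. -/
def CI (I c : ℍ[ℝ]) : Prop := ∃ x y : ℝ, c = (x : ℍ[ℝ]) + (y : ℍ[ℝ]) * I

variable {I J : ℍ[ℝ]}

lemma sq_neg_one (hre : I.re = 0) (hnorm : ‖I‖ = 1) : I * I = -1 := by
  have hs : star I = -I := Quaternion.star_eq_neg.mpr hre
  have h := Quaternion.star_mul_self I
  rw [hs, neg_mul] at h
  have hn : normSq I = 1 := by
    rw [Quaternion.normSq_eq_norm_mul_self, hnorm]; ring
  rw [hn] at h
  have h2 : -(I * I) = 1 := by exact_mod_cast h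
  exact neg_eq_iff_eq_neg.mp h2

lemma mul_form (hI2 : I * I = -1) (x y x' y' : ℝ) :
    ((x:ℍ[ℝ]) + (y:ℍ[ℝ]) * I) * ((x':ℍ[ℝ]) + (y':ℍ[ℝ]) * I)
    = ((x*x'-y*y' : ℝ) : ℍ[ℝ]) + ((x*y'+y*x' : ℝ):ℍ[ℝ]) * I := by
  have h3 : (↑y:ℍ[ℝ])*I*(↑y'*I) = ↑y*↑y'*(I*I) := by
    rw [mul_assoc (↑y:ℍ[ℝ]) I, ← mul_assoc I, ← Quaternion.coe_commutes y' I,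
      mul_assoc (↑y':ℍ[ℝ]), ← mul_assoc (↑y:ℍ[ℝ])]
  push_cast
  rw [add_mul, mul_add, mul_add, mul_assoc (↑y:ℍ[ℝ]) I ↑x', ← Quaternion.coe_commutes x' I,
    h3, hI2]
  noncomm_ring

lemma star_form (hIs : star I = -I) (x y : ℝ) :
    star ((x:ℍ[ℝ]) + (y:ℍ[ℝ]) * I) = (x:ℍ[ℝ]) + ((-y : ℝ):ℍ[ℝ]) * I := by
  rw [star_add, star_mul, hIs]
  simp only [Quaternion.star_coe]
  rw [← Quaternion.coe_commutes y (-I)]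
  push_cast
  noncomm_ring

lemma ci_mul (hI2 : I * I = -1) {a b : ℍ[ℝ]} (ha : CI I a) (hb : CI I b) : CI I (a * b) := by
  obtain ⟨x, y, rfl⟩ := ha; obtain ⟨x', y', rfl⟩ := hb
  exact ⟨x*x'-y*y', x*y'+y*x', mul_form hI2 x y x' y'⟩

lemma ci_commute (hI2 : I * I = -1) {a b : ℍ[ℝ]} (ha : CI I a) (hb : CI I b) :
    a * b = b * a := by
  obtain ⟨x, y, rfl⟩ := ha; obtain ⟨x', y', rfl⟩ := hb
  rw [mul_form hI2, mul_form hI2, show x*x'-y*y' = x'*x-y'*y by ring,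
    show x*y'+y*x' = x'*y+y'*x by ring]

lemma ci_star (hIs : star I = -I) {a : ℍ[ℝ]} (ha : CI I a) : CI I (star a) := by
  obtain ⟨x, y, rfl⟩ := ha
  exact ⟨x, -y, star_form hIs x y⟩

lemma ci_one : CI I 1 := ⟨1, 0, by push_cast; simp⟩

lemma ci_pow (hI2 : I * I = -1) {a : ℍ[ℝ]} (ha : CI I a) (n : ℕ) : CI I (a ^ n) := by
  induction n with
  | zero => simpa using ci_one
  | succ n ih => rw [pow_succ]; exact ci_mul hI2 ih ha

lemma ci_sum (s : Finset ℕ) (f : ℕ → ℍ[ℝ]) (h : ∀ i ∈ s, CI I (f i)) :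
    CI I (∑ i ∈ s, f i) := by
  classical
  induction s using Finset.induction_on with
  | empty => exact ⟨0, 0, by simp⟩
  | @insert a s' hx ih =>
    rw [Finset.sum_insert hx]
    obtain ⟨u, v, h1⟩ := h a (Finset.mem_insert_self a s')
    obtain ⟨u', v', h2⟩ := ih (fun i hi => h i (Finset.mem_insert_of_mem hi))
    exact ⟨u + u', v + v', by rw [h1, h2]; push_cast; noncomm_ring⟩

lemma J_swap (hI2 : I * I = -1) (hIs : star I = -I) (hIJ : I * J = -(J * I))
    {c : ℍ[ℝ]} (hc : CI I c) : c * J = J * star c := by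
  obtain ⟨x, y, rfl⟩ := hc
  rw [star_form hIs]
  rw [add_mul, mul_add, mul_assoc, hIJ, ← Quaternion.coe_commutes x J,
    ← mul_assoc J _ I, ← Quaternion.coe_commutes (-y) J]
  push_cast
  noncomm_ring

/-! ### qeval lemmas -/

lemma qeval_eq_range (P : Polynomial ℍ[ℝ]) (q : ℍ[ℝ]) (N : ℕ) (h : P.natDegree < N) :
    qeval P q = ∑ n ∈ Finset.range N, q ^ n * P.coeff n :=
  P.sum_over_range' (fun n => mul_zero _) N h

lemma qeval_zero (q : ℍ[ℝ]) : qeval 0 q = 0 := by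
  simp [qeval]

lemma qeval_add (A B : Polynomial ℍ[ℝ]) (q : ℍ[ℝ]) :
    qeval (A + B) q = qeval A q + qeval B q := by
  set N := (A + B).natDegree + A.natDegree + B.natDegree + 1 with hN
  rw [qeval_eq_range _ q N (by omega), qeval_eq_range A q N (by omega),
    qeval_eq_range B q N (by omega), ← Finset.sum_add_distrib]
  refine Finset.sum_congr rfl fun n _ => ?_
  rw [coeff_add, mul_add]

lemma qeval_finset_sum (s : Finset ℕ) (F : ℕ → Polynomial ℍ[ℝ]) (q : ℍ[ℝ]) :
    qeval (∑ i ∈ s, F i) q = ∑ i ∈ s, qeval (F i) q := by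
  classical
  induction s using Finset.induction_on with
  | empty => simp [qeval_zero]
  | @insert a s' hx ih =>
    rw [Finset.sum_insert hx, Finset.sum_insert hx, qeval_add, ih]

lemma qeval_C_mul (a : ℍ[ℝ]) (B : Polynomial ℍ[ℝ]) (q : ℍ[ℝ]) (h : Commute q a) :
    qeval (C a * B) q = a * qeval B q := by
  set N := (C a * B).natDegree + B.natDegree + 1 with hN
  rw [qeval_eq_range _ q N (by omega), qeval_eq_range B q N (by omega), Finset.mul_sum]
  refine Finset.sum_congr rfl fun n _ => ?_
  rw [coeff_C_mul, ← mul_assoc, (h.pow_left n).eq, mul_assoc]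

lemma qeval_X_mul (B : Polynomial ℍ[ℝ]) (q : ℍ[ℝ]) :
    qeval (X * B) q = q * qeval B q := by
  have hd : (X * B).natDegree < B.natDegree + 1 + 1 := by
    have h := Polynomial.natDegree_mul_le (p := (X : Polynomial ℍ[ℝ])) (q := B)
    have hx : (X : Polynomial ℍ[ℝ]).natDegree = 1 := Polynomial.natDegree_X
    omega
  rw [qeval_eq_range _ q (B.natDegree + 1 + 1) hd,
    qeval_eq_range B q (B.natDegree + 1) (lt_add_one _)]
  rw [Finset.sum_range_succ']
  simp only [coeff_X_mul, coeff_X_mul_zero, pow_zero, one_mul, mul_zero, add_zero]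
  rw [Finset.mul_sum]
  refine Finset.sum_congr rfl fun n _ => ?_
  rw [pow_succ', mul_assoc]

lemma qeval_Xpow_mul (i : ℕ) (B : Polynomial ℍ[ℝ]) (q : ℍ[ℝ]) :
    qeval (X ^ i * B) q = q ^ i * qeval B q := by
  induction i generalizing B with
  | zero => simp
  | succ n ih =>
    have : (X : Polynomial ℍ[ℝ]) ^ (n + 1) * B = X ^ n * (X * B) := by
      rw [pow_succ, mul_assoc]
    rw [this, ih, qeval_X_mul, pow_succ, mul_assoc]

lemma qeval_mul (A B : Polynomial ℍ[ℝ]) (q : ℍ[ℝ]) (hc : ∀ n, Commute q (A.coeff n)) :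
    qeval (A * B) q = qeval A q * qeval B q := by
  conv_lhs => rw [A.as_sum_support_C_mul_X_pow]
  rw [Finset.sum_mul, qeval_finset_sum]
  have : ∀ i ∈ A.support, qeval (C (A.coeff i) * X ^ i * B) q
      = (q ^ i * A.coeff i) * qeval B q := by
    intro i _
    rw [mul_assoc, qeval_C_mul _ _ _ (hc i), qeval_Xpow_mul, ← mul_assoc,
      ← ((hc i).pow_left i).eq]
  rw [Finset.sum_congr rfl this, ← Finset.sum_mul]
  congr 1

lemma qeval_C_mul' (a : ℍ[ℝ]) (B : Polynomial ℍ[ℝ]) (q q' : ℍ[ℝ])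
    (h : ∀ n : ℕ, q ^ n * a = a * q' ^ n) :
    qeval (C a * B) q = a * qeval B q' := by
  set N := (C a * B).natDegree + B.natDegree + 1 with hN
  rw [qeval_eq_range _ q N (by omega), qeval_eq_range B q' N (by omega), Finset.mul_sum]
  refine Finset.sum_congr rfl fun n _ => ?_
  rw [coeff_C_mul, ← mul_assoc, h n, mul_assoc]

theorem gauss_lucas_stmt15 (P Pc P₁ P₂ : Polynomial ℍ[ℝ])
    (hPc : ∀ n, Pc.coeff n = star (P.coeff n))
    (I J : ℍ[ℝ]) (hIre : I.re = 0) (hInorm : ‖I‖ = 1)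
    (hJre : J.re = 0) (hJnorm : ‖J‖ = 1) (horth : (I * J).re = 0)
    (h1 : ∀ n, ∃ x y : ℝ, P₁.coeff n = (x : ℍ[ℝ]) + y • I)
    (h2 : ∀ n, ∃ x y : ℝ, P₂.coeff n = (x : ℍ[ℝ]) + y • I)
    (hdec : ∀ n, P.coeff n = P₁.coeff n + P₂.coeff n * J) :
    ∀ x y : ℝ,
      qeval (P * Pc) ((x : ℍ[ℝ]) + y • I) =
        qeval P₁ ((x : ℍ[ℝ]) + y • I) * star (qeval P₁ (star ((x : ℍ[ℝ]) + y • I))) +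
        qeval P₂ ((x : ℍ[ℝ]) + y • I) * star (qeval P₂ (star ((x : ℍ[ℝ]) + y • I))) := by
  intro x y
  -- basic facts about I and J
  have hI2 : I * I = -1 := sq_neg_one hIre hInorm
  have hJ2 : J * J = -1 := sq_neg_one hJre hJnorm
  have hIs : star I = -I := Quaternion.star_eq_neg.mpr hIre
  have hJs : star J = -J := Quaternion.star_eq_neg.mpr hJre
  have hIJ : I * J = -(J * I) := by
    have h := Quaternion.self_add_star' (I * J)
    rw [horth, star_mul, hIs, hJs, neg_mul_neg] at h
    simp only [mul_zero, Quaternion.coe_zero] at h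
    exact eq_neg_of_add_eq_zero_left h
  -- rewrite smul into coe-mul
  simp only [← Quaternion.coe_mul_eq_smul] at h1 h2 ⊢
  set z : ℍ[ℝ] := (x : ℍ[ℝ]) + (y : ℍ[ℝ]) * I with hzdef
  have hzCI : CI I z := ⟨x, y, rfl⟩
  have hzbarCI : CI I (star z) := ci_star hIs hzCI
  have hP1CI : ∀ n, CI I (P₁.coeff n) := fun n => by
    obtain ⟨u, v, huv⟩ := h1 n; exact ⟨u, v, huv⟩
  have hP2CI : ∀ n, CI I (P₂.coeff n) := fun n => by
    obtain ⟨u, v, huv⟩ := h2 n; exact ⟨u, v, huv⟩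
  -- qeval values are in ℂ(I)
  have hqCI : ∀ (Q : Polynomial ℍ[ℝ]), (∀ n, CI I (Q.coeff n)) → ∀ w : ℍ[ℝ], CI I w →
      CI I (qeval Q w) := by
    intro Q hQ w hw
    rw [qeval_eq_range Q w (Q.natDegree + 1) (lt_add_one _)]
    exact ci_sum _ _ fun i _ => ci_mul hI2 (ci_pow hI2 hw i) (hQ i)
  have hACI := hqCI P₁ hP1CI z hzCI
  have hA'CI := hqCI P₁ hP1CI (star z) hzbarCI
  have hBCI := hqCI P₂ hP2CI z hzCI
  have hB'CI := hqCI P₂ hP2CI (star z) hzbarCI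
  -- coefficient-level decomposition of Pc
  have hPcco : ∀ n, Pc.coeff n = star (P₁.coeff n) - P₂.coeff n * J := by
    intro n
    rw [hPc, hdec, star_add, star_mul, hJs]
    have : J * star (P₂.coeff n) = P₂.coeff n * J :=
      (J_swap hI2 hIs hIJ (hP2CI n)).symm
    rw [neg_mul, this]
    noncomm_ring
  -- P = P₁ + P₂ * C J
  have hPdec : P = P₁ + P₂ * C J := Polynomial.ext fun n => by
    rw [coeff_add, coeff_mul_C, hdec]
  -- generic evaluation of Pc on ℂ(I)
  have hPcval : ∀ w : ℍ[ℝ], CI I w →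
      qeval Pc w = star (qeval P₁ (star w)) - qeval P₂ w * J := by
    intro w hw
    have hwbar : CI I (star w) := ci_star hIs hw
    set N := Pc.natDegree + P₁.natDegree + P₂.natDegree + 1 with hN
    rw [qeval_eq_range Pc w N (by omega), qeval_eq_range P₁ (star w) N (by omega),
      qeval_eq_range P₂ w N (by omega)]
    rw [star_sum, Finset.sum_mul, ← Finset.sum_sub_distrib]
    refine Finset.sum_congr rfl fun n _ => ?_
    rw [hPcco n, star_mul, star_pow, star_star]
    have hcomm : star (P₁.coeff n) * w ^ n = w ^ n * star (P₁.coeff n) :=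
      ci_commute hI2 (ci_star hIs (hP1CI n)) (ci_pow hI2 hw n)
    rw [hcomm, mul_sub, mul_assoc]
  -- commutation of z with coefficients
  have hcomm1 : ∀ n, Commute z (P₁.coeff n) := fun n =>
    ci_commute hI2 hzCI (hP1CI n)
  have hcomm2 : ∀ n, Commute z (P₂.coeff n) := fun n =>
    ci_commute hI2 hzCI (hP2CI n)
  -- z^n * J = J * (star z)^n
  have hzJ : ∀ n : ℕ, z ^ n * J = J * (star z) ^ n := by
    intro n
    induction n with
    | zero => simp
    | succ m ih =>
      rw [pow_succ, mul_assoc, J_swap hI2 hIs hIJ hzCI, ← mul_assoc, ih,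
        mul_assoc, ← pow_succ]
  -- main splitting
  have hsplit : qeval (P * Pc) z
      = qeval P₁ z * qeval Pc z + qeval P₂ z * (J * qeval Pc (star z)) := by
    rw [hPdec, add_mul, qeval_add, qeval_mul P₁ Pc z hcomm1, mul_assoc,
      qeval_mul P₂ (C J * Pc) z hcomm2]
    congr 2
    exact qeval_C_mul' J Pc z (star z) hzJ
  set A := qeval P₁ z
  set A' := qeval P₁ (star z)
  set B := qeval P₂ z
  set B' := qeval P₂ (star z)
  have K1 : qeval Pc z = star A' - B * J := hPcval z hzCI
  have K2 : qeval Pc (star z) = star A - B' * J := by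
    have := hPcval (star z) hzbarCI
    rwa [star_star] at this
  rw [hsplit, K1, K2]
  have e1 : J * (star A - B' * J) = A * J + star B' := by
    rw [mul_sub, ← J_swap hI2 hIs hIJ hACI, J_swap hI2 hIs hIJ hB'CI, ← mul_assoc, hJ2]
    noncomm_ring
  rw [e1]
  have e2 : B * (A * J) = A * (B * J) := by
    rw [← mul_assoc, ← mul_assoc, ci_commute hI2 hBCI hACI]
  rw [mul_add, e2, mul_sub]
  noncomm_ring
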